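/- arXiv:1708.02772 — 2 statements merged into one kernel-verified Lean document; each statement's English description precedes it below -/
import Mathlib

section
/- For every instance (X, Y, s, b) of Numerical Matching with Target Sums with |X| = |Y| = n ≥ 1, a maximum common connected induced subgraph of the base gadgets B_G and B_H has exactly |V(B_G)| − n + 1 vertices. -/
/-!
Deleting the `n - 1` middle vertices of the anchor paths leaves the same graph on both sides,
which gives a common connected induced subgraph of the claimed size. Conversely, let `R ≅ S'`
be a common connected induced subgraph missing fewer than `n - 1` vertices of `B_G`. Every
component of `B_G - x̄` misses `n` anchors, so `R` contains the hub, and the isomorphism fixes it: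
the hub keeps at least `3n + 2` neighbours in `R`, while every other vertex has degree at most
five. Now if the `j`-th anchor path of `B_G`
has its middle vertex and its whole first `D`-gadget in `R`, this connected, hub-free set of
`2Σ_s + 4` vertices contains a triangle, so its image lies in a single component of `B_H - ȳ`
containing a triangle. The union of the `C`-gadgets and the anchor paths of `B_H` is
triangle-free, and a `D`-gadget has only `2Σ_s + 3` vertices; hence every anchor path forces
a missing vertex of its own.
-/
namespace MCSPaper

/-- One directed step of the adjacency of a chain of triangle gadgets `K^v_w`.
Within gadget `j` (vertices: `(j,0) = v'`, `(j,1) = u`, `(j,2) = w`, where the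
attachment vertex `v` of gadget `j` is the pendant `w` of gadget `j-1`):
edges `v'-u`, `v'-w`, and the attachment edges `w_{j}-v'_{j+1}`, `w_j-u_{j+1}`. -/
def chainStep (j t j' t' : ℕ) : Prop :=
  (j' = j ∧ t = 0 ∧ (t' = 1 ∨ t' = 2)) ∨ (j' = j + 1 ∧ t = 2 ∧ (t' = 0 ∨ t' = 1))

/-- Vertices of the base gadgets `B_G`/`B_H` of the NMwTS reduction.
`g = false` selects the chordless `C`-gadgets, `g = true` the `D`-gadgets with chords.
For each `i` and `g` there is a cycle through the hub (`x̄` resp. `ȳ`) consisting of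
two arcs (`side = false/true`) of `S` internal vertices each, meeting at `far i g`
(the vertex `v'`), the anchor vertex `anchor i g` and the prime anchor `panchor i g`,
and `apmid j` are the middle vertices of the `n-1` anchor paths. -/
inductive BaseVert (n S : ℕ) : Type
  | hub
  | arc (i : Fin n) (g : Bool) (side : Bool) (p : Fin S)
  | far (i : Fin n) (g : Bool)
  | anchor (i : Fin n) (g : Bool)
  | panchor (i : Fin n) (g : Bool)
  | apmid (j : Fin (n - 1))
  deriving DecidableEq, Fintype

/-- Adjacency (one direction) of the base gadget; `gb` selects on which gadget type
(`true` = `D`-gadgets, as in `B_G`; `false` = `C`-gadgets, as in `B_H`) the anchor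
paths between consecutive prime anchor vertices are placed. -/
def baseRel (n S : ℕ) (gb : Bool) : BaseVert n S → BaseVert n S → Prop
  | .hub, .arc _ _ _ p => p.val = 0
  | .arc i g s p, .arc i' g' s' q =>
      i = i' ∧ g = g' ∧
        ((s = s' ∧ q.val = p.val + 1) ∨
          (g = true ∧ s ≠ s' ∧ ((p.val = 0 ∧ q.val = 0) ∨ (p.val + 1 = S ∧ q.val + 1 = S))))
  | .arc i g _ p, .far i' g' => i = i' ∧ g = g' ∧ p.val + 1 = S
  | .far i g, .panchor i' g' => i = i' ∧ g = g'
  | .panchor i g, .anchor i' g' => i = i' ∧ g = g'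
  | .panchor i g, .apmid j => g = gb ∧ (i.val = j.val ∨ i.val = j.val + 1)
  | _, _ => False

/-- The base gadget graph (`B_G` for `gb = true`, `B_H` for `gb = false`). -/
def baseGraph (n S : ℕ) (gb : Bool) : SimpleGraph (BaseVert n S) :=
  SimpleGraph.fromRel (baseRel n S gb)

/-- `Σ_s = ∑ i (s(x_i) + s(y_i))`. -/
def SigmaS (n : ℕ) (sx sy : Fin n → ℕ) : ℕ := ∑ i, (sx i + sy i)

/-- The vertices of the `xy`-paths of the graph `G`: for each `i`, an `x`-chain of
`s(x_i)` triangle gadgets, a `y`-chain of `s(y_i)` triangle gadgets and a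
separating path of `3` vertices. -/
inductive XYVert (n : ℕ) (sx sy : Fin n → ℕ) : Type
  | xv (i : Fin n) (j : Fin (sx i)) (t : Fin 3)
  | yv (i : Fin n) (j : Fin (sy i)) (t : Fin 3)
  | sep (i : Fin n) (t : Fin 3)
  deriving DecidableEq, Fintype

/-- Adjacency (one direction) of the graph `G` of the reduction: the base gadget `B_G`
together with, for each `i`, the `x`-chain attached at the anchor `c_i` of the `i`-th
`C`-gadget, the `y`-chain attached at the anchor `c_{i+n}` of the `i`-th `D`-gadget, and
the separating path joining the pendant ends of the two chains. -/
def graphGRel (n : ℕ) (sx sy : Fin n → ℕ) :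
    BaseVert n (SigmaS n sx sy) ⊕ XYVert n sx sy →
      BaseVert n (SigmaS n sx sy) ⊕ XYVert n sx sy → Prop
  | .inl a, .inl a' => baseRel n (SigmaS n sx sy) true a a'
  | .inl (.anchor i false), .inr (.xv i' j t) => i = i' ∧ j.val = 0 ∧ (t.val = 0 ∨ t.val = 1)
  | .inl (.anchor i true), .inr (.yv i' j t) => i = i' ∧ j.val = 0 ∧ (t.val = 0 ∨ t.val = 1)
  | .inr (.xv i j t), .inr (.xv i' j' t') => i = i' ∧ chainStep j.val t.val j'.val t'.val
  | .inr (.yv i j t), .inr (.yv i' j' t') => i = i' ∧ chainStep j.val t.val j'.val t'.val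
  | .inr (.xv i j t), .inr (.sep i' t') => i = i' ∧ j.val + 1 = sx i ∧ t.val = 2 ∧ t'.val = 0
  | .inr (.sep i t), .inr (.sep i' t') => i = i' ∧ t'.val = t.val + 1
  | .inr (.sep i t), .inr (.yv i' j t') => i = i' ∧ t.val = 2 ∧ j.val + 1 = sy i' ∧ t'.val = 2
  | _, _ => False

/-- The graph `G` of the NMwTS reduction. -/
def graphG (n : ℕ) (sx sy : Fin n → ℕ) :
    SimpleGraph (BaseVert n (SigmaS n sx sy) ⊕ XYVert n sx sy) :=
  SimpleGraph.fromRel (graphGRel n sx sy)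

/-- The vertices of the `b`-paths of the graph `H`: for each `i`, a chain of
`b_i + 1` triangle gadgets. -/
inductive BVert (n : ℕ) (b : Fin n → ℕ) : Type
  | bv (i : Fin n) (j : Fin (b i + 1)) (t : Fin 3)
  deriving DecidableEq, Fintype

/-- Adjacency (one direction) of the graph `H` of the reduction: the base gadget `B_H`
together with, for each `i`, the `b`-chain of `b_i + 1` triangle gadgets attached at the
anchor `c_i`, whose final pendant vertex is joined to the anchor `c_{i+n}`. -/
def graphHRel (n : ℕ) (sx sy b : Fin n → ℕ) :
    BaseVert n (SigmaS n sx sy) ⊕ BVert n b →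
      BaseVert n (SigmaS n sx sy) ⊕ BVert n b → Prop
  | .inl a, .inl a' => baseRel n (SigmaS n sx sy) false a a'
  | .inl (.anchor i false), .inr (.bv i' j t) => i = i' ∧ j.val = 0 ∧ (t.val = 0 ∨ t.val = 1)
  | .inr (.bv i j t), .inl (.anchor i' true) => i = i' ∧ j.val = b i ∧ t.val = 2
  | .inr (.bv i j t), .inr (.bv i' j' t') => i = i' ∧ chainStep j.val t.val j'.val t'.val
  | _, _ => False

/-- The graph `H` of the NMwTS reduction. -/
def graphH (n : ℕ) (sx sy b : Fin n → ℕ) :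
    SimpleGraph (BaseVert n (SigmaS n sx sy) ⊕ BVert n b) :=
  SimpleGraph.fromRel (graphHRel n sx sy b)

/-- A graph is biconnected if it has more than two vertices and deleting any single
vertex leaves it connected. -/
def Biconnected {V : Type*} [Fintype V] (G : SimpleGraph V) : Prop :=
  2 < Fintype.card V ∧ ∀ v : V, (G.induce {u | u ≠ v}).Connected

/-- `R`, `S` carry a common connected induced subgraph of `G` and `H`:
`G[R]` is connected and isomorphic to `H[S]`. -/
def IsCCIS {α β : Type*} (G : SimpleGraph α) (H : SimpleGraph β)
    (R : Set α) (S : Set β) : Prop :=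
  (G.induce R).Connected ∧ Nonempty (G.induce R ≃g H.induce S)

end MCSPaper

namespace SimpleGraph

variable {V W : Type*} {G : SimpleGraph V} {H : SimpleGraph W}

theorem Preconnected.subset_of_adj_closed {T K : Set V} (hT : (G.induce T).Preconnected)
    (hK : ∀ a ∈ T, ∀ b ∈ T, G.Adj a b → a ∈ K → b ∈ K) {t : V} (ht : t ∈ T) (htK : t ∈ K) :
    T ⊆ K := by
  have walk_closed (u v : T) (w : (G.induce T).Walk u v) (hu : (u : V) ∈ K) : (v : V) ∈ K := by
    induction w with
    | nil => exact hu
    | cons hadj _ ih => exact ih (hK _ (Subtype.prop _) _ (Subtype.prop _) hadj hu)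
  exact fun v hv => walk_closed _ ⟨v, hv⟩ (hT ⟨t, ht⟩ ⟨v, hv⟩).some htK

theorem Adj.reachable_induce {X : Set V} {a b : V} (h : G.Adj a b) (ha : a ∈ X) (hb : b ∈ X) :
    (G.induce X).Reachable ⟨a, ha⟩ ⟨b, hb⟩ :=
  Adj.reachable (G := G.induce X) h

theorem Iso.ncard_adj_le_ncard_neighborSet [Finite W] {R : Set V} {S : Set W}
    (φ : G.induce R ≃g H.induce S) {v : V} (hv : v ∈ R) :
    {w | w ∈ R ∧ G.Adj v w}.ncard ≤ (H.neighborSet (φ ⟨v, hv⟩)).ncard := by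
  rw [← Nat.card_coe_set_eq, ← Nat.card_coe_set_eq]
  refine Nat.card_le_card_of_injective (fun w => ⟨φ ⟨w, w.2.1⟩, φ.map_adj_iff.2 w.2.2⟩) ?_
  rintro ⟨w, hw⟩ ⟨w', hw'⟩ h
  have h' : (φ ⟨w, hw.1⟩ : W) = φ ⟨w', hw'.1⟩ := Subtype.mk.inj h
  simpa using φ.injective (Subtype.ext h')

end SimpleGraph

namespace MCSPaper

namespace BaseVert

variable {n S : ℕ} {gb : Bool}

theorem adj_hub_arc {i : Fin n} {g s : Bool} {p : Fin S} (hp : p.val = 0) :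
    (baseGraph n S gb).Adj hub (arc i g s p) := by
  simp [baseGraph, baseRel, hp]

theorem adj_arc_succ {i : Fin n} {g s : Bool} {p q : Fin S} (hq : q.val = p.val + 1) :
    (baseGraph n S gb).Adj (arc i g s p) (arc i g s q) := by
  simp [baseGraph, baseRel, hq, Fin.ext_iff]

theorem adj_arc_far {i : Fin n} {g s : Bool} {p : Fin S} (hp : p.val + 1 = S) :
    (baseGraph n S gb).Adj (arc i g s p) (far i g) := by
  simp [baseGraph, baseRel, hp]

theorem adj_arc_chord {i : Fin n} {p : Fin S} (hp : p.val + 1 = S) :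
    (baseGraph n S gb).Adj (arc i true false p) (arc i true true p) := by
  simp [baseGraph, baseRel, hp]

theorem adj_far_panchor {i : Fin n} {g : Bool} :
    (baseGraph n S gb).Adj (far i g) (panchor i g) := by
  simp [baseGraph, baseRel]

theorem adj_panchor_anchor {i : Fin n} {g : Bool} :
    (baseGraph n S gb).Adj (panchor i g) (anchor i g) := by
  simp [baseGraph, baseRel]

theorem adj_panchor_apmid {j : Fin (n - 1)} :
    (baseGraph n S gb).Adj (panchor ⟨j, by omega⟩ gb) (apmid j) := by
  simp [baseGraph, baseRel]

theorem reachable_induce_arc_of_le {X : Set (BaseVert n S)} {i : Fin n} {g s : Bool}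
    (hX : ∀ p, arc i g s p ∈ X) {p q : Fin S} (hpq : p ≤ q) :
    ((baseGraph n S gb).induce X).Reachable ⟨_, hX p⟩ ⟨_, hX q⟩ := by
  obtain ⟨q, hq⟩ := q
  change p.val ≤ q at hpq
  induction q with
  | zero => rw [show p = ⟨0, hq⟩ from Fin.ext (by simp; omega)]
  | succ k ih =>
    rcases hpq.lt_or_eq with hlt | heq
    · exact (ih (by omega) (by omega)).trans
        ((adj_arc_succ (p := ⟨k, by omega⟩) (q := ⟨k + 1, hq⟩) rfl).reachable_induce _ _)
    · rw [show p = ⟨k + 1, hq⟩ from Fin.ext heq]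

def gadgetVert (g : Bool) (i : Fin n) : (Bool × Fin S) ⊕ Fin 3 → BaseVert n S :=
  Sum.elim (fun x => arc i g x.1 x.2) ![far i g, panchor i g, anchor i g]

theorem gadgetVert_injective2 (g : Bool) :
    Function.Injective2 (gadgetVert (n := n) (S := S) g) := by
  rintro i i' (⟨s, p⟩ | t) (⟨s', p'⟩ | t') h <;>
    [skip; fin_cases t'; fin_cases t; (fin_cases t <;> fin_cases t')] <;>
    simp_all [gadgetVert]

-- The `D`-gadget of `B_G` at which the `j`-th anchor path starts, and the middle vertex of the path.
def pathGadgetVert (j : Fin (n - 1)) : Option ((Bool × Fin S) ⊕ Fin 3) → BaseVert n S :=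
  fun x => x.elim (apmid j) (gadgetVert true ⟨j, by omega⟩)

theorem pathGadgetVert_injective2 :
    Function.Injective2 (pathGadgetVert (n := n) (S := S)) := by
  rintro j j' (_ | x) (_ | x') h
  · simpa [pathGadgetVert] using h
  · rcases x' with _ | t' <;> [skip; fin_cases t'] <;> simp [pathGadgetVert, gadgetVert] at h
  · rcases x with _ | t <;> [skip; fin_cases t] <;> simp [pathGadgetVert, gadgetVert] at h
  · obtain ⟨hj, rfl⟩ := gadgetVert_injective2 true h
    exact ⟨Fin.ext (by simpa using hj), rfl⟩

theorem pathGadgetVert_ne_hub (j : Fin (n - 1)) (x : Option ((Bool × Fin S) ⊕ Fin 3)) :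
    pathGadgetVert j x ≠ hub := by
  rcases x with _ | _ | t <;> [skip; skip; fin_cases t] <;> simp [pathGadgetVert, gadgetVert]

theorem connected_induce_range_pathGadgetVert (hS : 0 < S) (j : Fin (n - 1)) :
    ((baseGraph n S true).induce (Set.range (pathGadgetVert j))).Connected := by
  set i : Fin n := ⟨j, by omega⟩
  have harc (s : Bool) : ∀ p : Fin S, arc i true s p ∈ Set.range (pathGadgetVert j) :=
    fun p => ⟨some (.inl (s, p)), rfl⟩
  have hfar : far i true ∈ Set.range (pathGadgetVert (S := S) j) := ⟨some (.inr 0), rfl⟩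
  have hpan : panchor i true ∈ Set.range (pathGadgetVert (S := S) j) := ⟨some (.inr 1), rfl⟩
  have reach_pan : ((baseGraph n S true).induce (Set.range (pathGadgetVert j))).Reachable
      ⟨_, hfar⟩ ⟨_, hpan⟩ := adj_far_panchor.reachable_induce _ _
  rw [SimpleGraph.connected_iff_exists_forall_reachable]
  refine ⟨⟨_, hfar⟩, fun ⟨v, x, hx⟩ => ?_⟩
  subst hx
  rcases x with _ | ⟨s, p⟩ | t
  · exact reach_pan.trans (adj_panchor_apmid.reachable_induce _ _)
  · exact ((reachable_induce_arc_of_le (harc s) (show p ≤ ⟨S - 1, by omega⟩ from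
      Nat.le_sub_one_of_lt p.isLt)).trans
        ((adj_arc_far (by simp; omega)).reachable_induce _ _)).symm
  · fin_cases t
    · rfl
    · exact reach_pan
    · exact reach_pan.trans (adj_panchor_anchor.reachable_induce _ _)

theorem natCard_range_gadgetVert (g : Bool) (i : Fin n) :
    Nat.card (Set.range (gadgetVert (S := S) g i)) = 2 * S + 3 := by
  rw [Nat.card_range_of_injective ((gadgetVert_injective2 g).right i)]
  simp

/-- Labels the components of `baseGraph n S gb` minus the hub: each gadget of side `!gb` is a
component of its own, labelled by its index, and the gadgets of side `gb` together with the
anchor paths form the component labelled `none` (the label of the hub itself is meaningless). -/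
def componentIdx (gb : Bool) : BaseVert n S → Option (Fin n)
  | arc i g _ _ | far i g | panchor i g | anchor i g => if g = gb then none else some i
  | _ => none

theorem componentIdx_eq_of_adj {u v : BaseVert n S} (h : (baseGraph n S gb).Adj u v)
    (hu : u ≠ hub) (hv : v ≠ hub) : u.componentIdx gb = v.componentIdx gb := by
  simp only [baseGraph, SimpleGraph.fromRel_adj] at h
  obtain ⟨-, h | h⟩ := h <;> cases u <;> cases v <;> simp_all [baseRel, componentIdx]

theorem componentIdx_ne_none_of_triangle {a b c : BaseVert n S}
    (hab : (baseGraph n S false).Adj a b) (hbc : (baseGraph n S false).Adj b c)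
    (hac : (baseGraph n S false).Adj a c) (ha : a ≠ hub) (hb : b ≠ hub) (hc : c ≠ hub) :
    a.componentIdx false ≠ none := by
  intro ha'
  have hb' := (componentIdx_eq_of_adj hab ha hb).symm.trans ha'
  have hc' := (componentIdx_eq_of_adj hac ha hc).symm.trans ha'
  simp only [baseGraph, SimpleGraph.fromRel_adj] at hab hbc hac
  obtain ⟨-, hab⟩ := hab; obtain ⟨-, hbc⟩ := hbc; obtain ⟨-, hac⟩ := hac
  cases a <;> cases b <;> cases c <;> simp_all [baseRel, componentIdx] <;> omega

theorem mem_range_gadgetVert_of_componentIdx {v : BaseVert n S} {i : Fin n}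
    (h : v.componentIdx gb = some i) : v ∈ Set.range (gadgetVert (!gb) i) := by
  cases v <;> simp only [componentIdx, reduceCtorEq] at h <;> split_ifs at h with hg <;>
    cases h <;> rw [← Bool.eq_not_iff.2 hg]
  · exact ⟨.inl (_, _), rfl⟩
  · exact ⟨.inr 0, rfl⟩
  · exact ⟨.inr 2, rfl⟩
  · exact ⟨.inr 1, rfl⟩

-- The clamped indices are the successor and predecessor of `p` whenever these exist.
theorem neighborSet_arc_subset (i : Fin n) (g s : Bool) (p : Fin S) :
    (baseGraph n S gb).neighborSet (arc i g s p) ⊆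
      ({hub, far i g, arc i g (!s) p, arc i g s ⟨min (p + 1) (S - 1), by omega⟩,
        arc i g s ⟨p - 1, by omega⟩} : Finset (BaseVert n S)) := by
  intro w hw
  simp only [SimpleGraph.mem_neighborSet, baseGraph, SimpleGraph.fromRel_adj] at hw
  cases w with
  | arc i' g' s' q =>
    obtain ⟨-, ⟨rfl, rfl, h⟩ | ⟨rfl, rfl, h⟩⟩ := hw <;>
      cases s <;> cases s' <;> simp_all [Fin.ext_iff] <;> omega
  | _ => simp_all [baseRel]

theorem neighborSet_panchor_subset (hn : 0 < n - 1) (i : Fin n) (g : Bool) :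
    (baseGraph n S gb).neighborSet (panchor i g) ⊆
      ({far i g, anchor i g, apmid ⟨min i (n - 2), by omega⟩,
        apmid ⟨min (i - 1) (n - 2), by omega⟩} : Finset (BaseVert n S)) := by
  intro w hw
  simp only [SimpleGraph.mem_neighborSet, baseGraph, SimpleGraph.fromRel_adj] at hw
  cases w with
  | apmid j =>
    obtain ⟨-, hj⟩ : g = gb ∧ (i.val = j.val ∨ i.val = j.val + 1) := by simpa [baseRel] using hw
    have := j.isLt
    simp only [Finset.coe_insert, Finset.coe_singleton, Set.mem_insert_iff,
      Set.mem_singleton_iff, reduceCtorEq, apmid.injEq, Fin.ext_iff, false_or]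
    omega
  | _ => simp_all [baseRel]

theorem ncard_neighborSet_le_five {v : BaseVert n S} (hv : v ≠ hub) :
    ((baseGraph n S gb).neighborSet v).ncard ≤ 5 := by
  classical
  suffices ∃ N : Finset (BaseVert n S), N.card ≤ 5 ∧ (baseGraph n S gb).neighborSet v ⊆ N by
    obtain ⟨N, hN, hsub⟩ := this
    exact (Set.ncard_le_ncard hsub).trans (by simpa using hN)
  cases v with
  | hub => exact absurd rfl hv
  | arc i g s p => exact ⟨_, Finset.card_le_five, neighborSet_arc_subset i g s p⟩
  | far i g =>
    rcases Nat.eq_zero_or_pos S with rfl | hS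
    · refine ⟨{panchor i g}, by simp, fun w hw => ?_⟩
      simp only [SimpleGraph.mem_neighborSet, baseGraph, SimpleGraph.fromRel_adj] at hw
      cases w <;> simp_all [baseRel]
    refine ⟨{arc i g false ⟨S - 1, by omega⟩, arc i g true ⟨S - 1, by omega⟩, panchor i g},
      Finset.card_le_three.trans (by omega), fun w hw => ?_⟩
    simp only [SimpleGraph.mem_neighborSet, baseGraph, SimpleGraph.fromRel_adj] at hw
    cases w with
    | arc i' g' s' q =>
      obtain ⟨rfl, rfl, hq⟩ : i' = i ∧ g' = g ∧ q.val + 1 = S := by simpa [baseRel] using hw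
      cases s' <;> simp [Fin.ext_iff] <;> omega
    | _ => simp_all [baseRel]
  | anchor i g =>
    refine ⟨{panchor i g}, by simp, fun w hw => ?_⟩
    simp only [SimpleGraph.mem_neighborSet, baseGraph, SimpleGraph.fromRel_adj] at hw
    cases w <;> simp_all [baseRel]
  | panchor i g =>
    rcases Nat.eq_zero_or_pos (n - 1) with hn | hn
    · refine ⟨{far i g, anchor i g}, Finset.card_le_two.trans (by omega), fun w hw => ?_⟩
      simp only [SimpleGraph.mem_neighborSet, baseGraph, SimpleGraph.fromRel_adj] at hw
      cases w with
      | apmid j => exact absurd j.isLt (by omega)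
      | _ => simp_all [baseRel]
    exact ⟨_, Finset.card_le_four.trans (by omega), neighborSet_panchor_subset hn i g⟩
  | apmid j =>
    refine ⟨{panchor ⟨j, by omega⟩ gb, panchor ⟨j + 1, by omega⟩ gb},
      Finset.card_le_two.trans (by omega), fun w hw => ?_⟩
    simp only [SimpleGraph.mem_neighborSet, baseGraph, SimpleGraph.fromRel_adj] at hw
    cases w with
    | panchor i g =>
      obtain ⟨rfl, hj⟩ : g = gb ∧ (i.val = j.val ∨ i.val = j.val + 1) := by
        simpa [baseRel] using hw
      simp only [Finset.coe_insert, Finset.coe_singleton, Set.mem_insert_iff,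
        Set.mem_singleton_iff, panchor.injEq, Fin.ext_iff, and_true]
      omega
    | _ => simp_all [baseRel]

theorem induce_compl_range_apmid_eq :
    (baseGraph n S true).induce (Set.range apmid)ᶜ =
      (baseGraph n S false).induce (Set.range apmid)ᶜ := by
  ext ⟨u, hu⟩ ⟨v, hv⟩
  simp only [Set.mem_compl_iff, Set.mem_range, not_exists] at hu hv
  simp only [SimpleGraph.comap_adj, baseGraph, SimpleGraph.fromRel_adj]
  cases u <;> cases v <;> simp_all [baseRel]

theorem connected_induce_compl_range_apmid (hS : 0 < S) :
    ((baseGraph n S gb).induce (Set.range apmid)ᶜ).Connected := by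
  have mem (v : BaseVert n S) (hv : ∀ j, v ≠ apmid j) : v ∈ (Set.range apmid)ᶜ :=
    fun ⟨j, hj⟩ => hv j hj.symm
  have harc i g s : ∀ p, arc i g s p ∈ (Set.range apmid)ᶜ := fun p => mem _ (by simp)
  have hhub := mem hub (by simp)
  have reach_arc i g s p : ((baseGraph n S gb).induce (Set.range apmid)ᶜ).Reachable
      ⟨hub, hhub⟩ ⟨arc i g s p, harc i g s p⟩ :=
    ((adj_hub_arc (p := ⟨0, hS⟩) rfl).reachable_induce _ _).trans
      (reachable_induce_arc_of_le (harc i g s) (show ⟨0, hS⟩ ≤ p from Nat.zero_le _))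
  have reach_far i g : ((baseGraph n S gb).induce (Set.range apmid)ᶜ).Reachable
      ⟨hub, hhub⟩ ⟨far i g, mem _ (by simp)⟩ :=
    (reach_arc i g false ⟨S - 1, by omega⟩).trans
      ((adj_arc_far (by simp; omega)).reachable_induce _ _)
  rw [SimpleGraph.connected_iff_exists_forall_reachable]
  refine ⟨⟨hub, hhub⟩, fun ⟨v, hv⟩ => ?_⟩
  cases v with
  | hub => rfl
  | arc i g s p => exact reach_arc i g s p
  | far i g => exact reach_far i g
  | panchor i g => exact (reach_far i g).trans (adj_far_panchor.reachable_induce _ _)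
  | anchor i g =>
    exact (reach_far i g).trans ((adj_far_panchor.reachable_induce _ (mem _ (by simp))).trans
      (adj_panchor_anchor.reachable_induce _ _))
  | apmid j => exact absurd ⟨j, rfl⟩ hv

theorem isCCIS_compl_range_apmid (hS : 0 < S) :
    IsCCIS (baseGraph n S true) (baseGraph n S false) (Set.range apmid)ᶜ (Set.range apmid)ᶜ :=
  ⟨connected_induce_compl_range_apmid hS, ⟨induce_compl_range_apmid_eq ▸ SimpleGraph.Iso.refl⟩⟩

theorem ncard_compl_range_apmid (hn : 0 < n) :
    (Set.range (apmid : Fin (n - 1) → BaseVert n S))ᶜ.ncard =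
      Fintype.card (BaseVert n S) - n + 1 := by
  have hsum := Set.ncard_add_ncard_compl (Set.range (apmid : Fin (n - 1) → BaseVert n S))
  have hhub : (Set.range apmid)ᶜ.Nonempty := ⟨(hub : BaseVert n S), by simp⟩
  rw [Set.ncard_range_of_injective (fun _ _ h => by simpa using h)] at hsum
  simp only [Nat.card_eq_fintype_card, Fintype.card_fin] at hsum
  have := (Set.ncard_pos (Set.toFinite _)).2 hhub
  omega

theorem hub_mem_of_ncard_compl_lt {R : Set (BaseVert n S)}
    (hR : ((baseGraph n S gb).induce R).Connected) (hRc : Rᶜ.ncard < n) : hub ∈ R := by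
  by_contra hhub
  obtain ⟨⟨r, hr⟩⟩ := hR.nonempty
  have hsub : R ⊆ {v | v.componentIdx gb = r.componentIdx gb} :=
    hR.preconnected.subset_of_adj_closed (fun a ha b hb hab h =>
      (componentIdx_eq_of_adj hab (ne_of_mem_of_not_mem ha hhub)
        (ne_of_mem_of_not_mem hb hhub)).symm.trans h) hr rfl
  obtain ⟨g, hg⟩ : ∃ g, ∀ i, (anchor i g : BaseVert n S).componentIdx gb ≠ r.componentIdx gb := by
    cases r.componentIdx gb with
    | none => exact ⟨!gb, fun i => by simp [componentIdx]⟩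
    | some k => exact ⟨gb, fun i => by simp [componentIdx]⟩
  have hanchors : Set.range (fun i => (anchor i g : BaseVert n S)) ⊆ Rᶜ := by
    rintro _ ⟨i, rfl⟩ hi
    exact hg i (hsub hi)
  have := Set.ncard_le_ncard hanchors
  rw [Set.ncard_range_of_injective (fun _ _ h => by simpa using h), Nat.card_eq_fintype_card,
    Fintype.card_fin] at this
  omega

theorem iso_apply_hub (hS : 0 < S) {R S' : Set (BaseVert n S)}
    (φ : (baseGraph n S true).induce R ≃g (baseGraph n S false).induce S') (hR : hub ∈ R)
    (hRc : Rᶜ.ncard + 2 ≤ n) : (φ ⟨hub, hR⟩ : BaseVert n S) = hub := by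
  by_contra hφ
  let arc0 (x : Fin n × Bool × Bool) : BaseVert n S := arc x.1 x.2.1 x.2.2 ⟨0, hS⟩
  have harc0 : Set.range arc0 ⊆ {w | w ∈ R ∧ (baseGraph n S true).Adj hub w} ∪ Rᶜ := by
    rintro _ ⟨x, rfl⟩
    by_cases hx : arc0 x ∈ R
    · exact Or.inl ⟨hx, adj_hub_arc rfl⟩
    · exact Or.inr hx
  have hinj : Function.Injective arc0 := by
    rintro ⟨_, _, _⟩ ⟨_, _, _⟩ h
    simp_all [arc0]
  have hcount := (Set.ncard_le_ncard harc0).trans (Set.ncard_union_le _ _)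
  have hdeg := (φ.ncard_adj_le_ncard_neighborSet hR).trans (ncard_neighborSet_le_five hφ)
  rw [Set.ncard_range_of_injective hinj] at hcount
  simp only [Nat.card_eq_fintype_card, Fintype.card_prod, Fintype.card_fin,
    Fintype.card_bool] at hcount
  omega

theorem exists_mem_range_gadgetVert {R S' : Set (BaseVert n S)}
    (φ : (baseGraph n S true).induce R ≃g (baseGraph n S false).induce S') (hR : hub ∈ R)
    (hφ : (φ ⟨hub, hR⟩ : BaseVert n S) = hub) {T : Set (BaseVert n S)} (hTR : T ⊆ R)
    (hT : ((baseGraph n S true).induce T).Preconnected) (hhub : hub ∉ T) {a b c : BaseVert n S}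
    (ha : a ∈ T) (hb : b ∈ T) (hc : c ∈ T) (hab : (baseGraph n S true).Adj a b)
    (hbc : (baseGraph n S true).Adj b c) (hac : (baseGraph n S true).Adj a c) :
    ∃ i, ∀ v (hv : v ∈ T), (φ ⟨v, hTR hv⟩ : BaseVert n S) ∈ Set.range (gadgetVert true i) := by
  have hne {v : BaseVert n S} (hv : v ∈ T) : (φ ⟨v, hTR hv⟩ : BaseVert n S) ≠ hub := fun h =>
    ne_of_mem_of_not_mem hv hhub (congrArg Subtype.val (φ.injective (Subtype.ext (h.trans hφ.symm))))
  have hadj {u v : BaseVert n S} (hu : u ∈ T) (hv : v ∈ T) (huv : (baseGraph n S true).Adj u v) :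
      (baseGraph n S false).Adj (φ ⟨u, hTR hu⟩) (φ ⟨v, hTR hv⟩) :=
    φ.map_adj_iff.2 huv
  obtain ⟨i, hi⟩ := Option.ne_none_iff_exists'.1 <| componentIdx_ne_none_of_triangle
    (hadj ha hb hab) (hadj hb hc hbc) (hadj ha hc hac) (hne ha) (hne hb) (hne hc)
  refine ⟨i, fun v hv => mem_range_gadgetVert_of_componentIdx (gb := false) ?_⟩
  have hK := hT.subset_of_adj_closed
    (K := {v | ∃ h : v ∈ R, (φ ⟨v, h⟩ : BaseVert n S).componentIdx false = some i})
    (fun u hu w hw huw ⟨_, hu'⟩ => ⟨hTR hw,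
      (componentIdx_eq_of_adj (hadj hu hw huw) (hne hu) (hne hw)).symm.trans hu'⟩) ha ⟨_, hi⟩
  exact (hK hv).2

theorem exists_pathGadgetVert_not_mem (hS : 0 < S) {R S' : Set (BaseVert n S)}
    (φ : (baseGraph n S true).induce R ≃g (baseGraph n S false).induce S') (hR : hub ∈ R)
    (hφ : (φ ⟨hub, hR⟩ : BaseVert n S) = hub) (j : Fin (n - 1)) :
    ∃ x, pathGadgetVert j x ∉ R := by
  by_contra! hT
  have hTR : Set.range (pathGadgetVert j) ⊆ R := by
    rintro _ ⟨x, rfl⟩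
    exact hT x
  have hlast : (⟨S - 1, by omega⟩ : Fin S).val + 1 = S := by simp; omega
  obtain ⟨i, hi⟩ := exists_mem_range_gadgetVert φ hR hφ hTR
    (connected_induce_range_pathGadgetVert hS j).preconnected
    (fun ⟨x, hx⟩ => pathGadgetVert_ne_hub j x hx)
    ⟨some (.inr 0), rfl⟩ ⟨some (.inl (false, _)), rfl⟩ ⟨some (.inl (true, _)), rfl⟩
    (adj_arc_far hlast).symm (adj_arc_chord hlast) (adj_arc_far hlast).symm
  have hinj : Function.Injective fun x =>
      (⟨(φ ⟨pathGadgetVert j x, hT x⟩ : BaseVert n S), hi _ ⟨x, rfl⟩⟩ : Set.range (gadgetVert true i)) := by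
    intro x x' h
    have h' : φ ⟨pathGadgetVert j x, hT x⟩ = φ ⟨pathGadgetVert j x', hT x'⟩ :=
      Subtype.ext (Subtype.mk.inj h)
    exact (pathGadgetVert_injective2 (Subtype.mk.inj (φ.injective h'))).2
  have := Nat.card_le_card_of_injective _ hinj
  rw [natCard_range_gadgetVert] at this
  simp only [Nat.card_eq_fintype_card, Fintype.card_option, Fintype.card_sum,
    Fintype.card_prod, Fintype.card_bool, Fintype.card_fin] at this
  omega

theorem le_ncard_compl_of_isCCIS (hS : 0 < S) {R S' : Set (BaseVert n S)}
    (h : IsCCIS (baseGraph n S true) (baseGraph n S false) R S') : n - 1 ≤ Rᶜ.ncard := by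
  obtain ⟨hR, ⟨φ⟩⟩ := h
  by_contra! hRc
  have hhub := hub_mem_of_ncard_compl_lt hR (by omega)
  choose x hx using exists_pathGadgetVert_not_mem hS φ hhub (iso_apply_hub hS φ hhub (by omega))
  have hinj : Function.Injective fun j => pathGadgetVert j (x j) :=
    fun _ _ h => (pathGadgetVert_injective2 h).1
  have := Set.ncard_le_ncard (show Set.range (fun j => pathGadgetVert j (x j)) ⊆ Rᶜ by
    rintro _ ⟨j, rfl⟩
    exact hx j)
  rw [Set.ncard_range_of_injective hinj, Nat.card_eq_fintype_card, Fintype.card_fin] at this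
  omega

end BaseVert

theorem mcs_baseGadgets_general (n : ℕ) (hn : 1 ≤ n) (sx sy : Fin n → ℕ)
    (hsx : ∀ i, 1 ≤ sx i) :
    (∃ (R S : Set (BaseVert n (SigmaS n sx sy))),
        IsCCIS (baseGraph n (SigmaS n sx sy) true) (baseGraph n (SigmaS n sx sy) false) R S ∧
        R.ncard = Fintype.card (BaseVert n (SigmaS n sx sy)) - n + 1) ∧
    (∀ (R S : Set (BaseVert n (SigmaS n sx sy))),
        IsCCIS (baseGraph n (SigmaS n sx sy) true) (baseGraph n (SigmaS n sx sy) false) R S →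
        R.ncard ≤ Fintype.card (BaseVert n (SigmaS n sx sy)) - n + 1) := by
  have hS : 0 < SigmaS n sx sy :=
    calc 0 < sx ⟨0, hn⟩ := hsx _
      _ ≤ sx ⟨0, hn⟩ + sy ⟨0, hn⟩ := Nat.le_add_right _ _
      _ ≤ SigmaS n sx sy :=
        Finset.single_le_sum (f := fun i => sx i + sy i) (by simp) (Finset.mem_univ _)
  refine ⟨⟨_, _, BaseVert.isCCIS_compl_range_apmid hS, BaseVert.ncard_compl_range_apmid hn⟩,
    fun R S' h => ?_⟩
  have hcompl := BaseVert.le_ncard_compl_of_isCCIS hS h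
  have hsum := Set.ncard_add_ncard_compl R
  rw [Nat.card_eq_fintype_card] at hsum
  omega

/-- For every instance of Numerical Matching with Target Sums
(`n ≥ 1`, positive values `sx i`, `sy i` and positive targets `b i`), a maximum
common connected induced subgraph of the base gadgets `B_G` and `B_H` has exactly
`|V(B_G)| - n + 1` vertices. -/
theorem mcs_baseGadgets (n : ℕ) (hn : 1 ≤ n) (sx sy b : Fin n → ℕ)
    (hsx : ∀ i, 1 ≤ sx i) (hsy : ∀ i, 1 ≤ sy i) (hb : ∀ i, 1 ≤ b i) :
    (∃ (R S : Set (BaseVert n (SigmaS n sx sy))),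
        IsCCIS (baseGraph n (SigmaS n sx sy) true) (baseGraph n (SigmaS n sx sy) false) R S ∧
        R.ncard = Fintype.card (BaseVert n (SigmaS n sx sy)) - n + 1) ∧
    (∀ (R S : Set (BaseVert n (SigmaS n sx sy))),
        IsCCIS (baseGraph n (SigmaS n sx sy) true) (baseGraph n (SigmaS n sx sy) false) R S →
        R.ncard ≤ Fintype.card (BaseVert n (SigmaS n sx sy)) - n + 1) :=
  mcs_baseGadgets_general n hn sx sy hsx

end MCSPaper
end

section
/- For every instance (X, Y, s, b) of Numerical Matching with Target Sums with |X| = |Y| = n ≥ 1, every maximum common connected induced subgraph isomorphism between the base gadgets B_G and B_H maps the vertex x̄ of B_G (the unique vertex of unbounded degree) to the vertex ȳ of B_H; that is, in any common connected induced subgraph isomorphism φ between B_G and B_H whose domain has |V(B_G)| − n + 1 vertices, x̄ is in the domain of φ and φ(x̄) = ȳ. -/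
/-!
Deleting `x̄` from `B_G` cuts every `C`-gadget off from the rest of the graph. A maximum
solution `R` misses only `n - 1` vertices, so it meets a `C`-gadget and the `D`-part, and being
connected it must contain `x̄`. Inside `R` the hub keeps at least `4n - (n - 1)` of its `4n`
neighbours, whereas every vertex of `B_H` other than `ȳ` has degree at most `n + 2`; since `φ`
preserves degrees, `φ x̄ = ȳ`.
-/

namespace Set

variable {α : Type*}

theorem ncard_le_three (a b c : α) : ({a, b, c} : Set α).ncard ≤ 3 :=
  (ncard_insert_le _ _).trans <| Nat.succ_le_succ <|
    (ncard_insert_le _ _).trans (by rw [ncard_singleton])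

theorem exists_apply_mem_of_ncard_compl_lt [Finite α] {ι : Type*} [Finite ι] {e : ι → α}
    (he : e.Injective) {R : Set α} (hR : Rᶜ.ncard < Nat.card ι) : ∃ i, e i ∈ R := by
  by_contra! h
  have hle := ncard_le_ncard (range_subset_iff.mpr h : range e ⊆ Rᶜ)
  rw [ncard_range_of_injective he] at hle
  omega

end Set

namespace SimpleGraph

variable {V W α : Type*} {G : SimpleGraph V}

theorem ncard_neighborSet_induce (R : Set V) (v : R) :
    ((G.induce R).neighborSet v).ncard = (G.neighborSet v ∩ R).ncard := by
  rw [neighborSet_induce, ← Set.ncard_image_of_injective _ Subtype.coe_injective,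
    Subtype.image_preimage_coe, Set.inter_comm]

theorem ncard_neighborSet_induce_le [Finite V] (R : Set V) (v : R) :
    ((G.induce R).neighborSet v).ncard ≤ (G.neighborSet v).ncard := by
  rw [ncard_neighborSet_induce]
  exact Set.ncard_le_ncard Set.inter_subset_left

theorem ncard_neighborSet_le_induce_add_ncard_compl [Finite V] (R : Set V) (v : R) :
    (G.neighborSet v).ncard ≤ ((G.induce R).neighborSet v).ncard + Rᶜ.ncard := by
  rw [ncard_neighborSet_induce, ← Set.ncard_inter_add_ncard_sdiff_eq_ncard (G.neighborSet v) R]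
  exact Nat.add_le_add_left (Set.ncard_le_ncard fun _ hx => hx.2) _

theorem Iso.ncard_neighborSet_eq {G' : SimpleGraph W} (φ : G ≃g G') (v : V) :
    (G'.neighborSet (φ v)).ncard = (G.neighborSet v).ncard :=
  (Nat.card_congr (φ.mapNeighborSet v)).symm

theorem Reachable.apply_eq_of_adj {f : V → α} (hf : ∀ a b, G.Adj a b → f a = f b) {a b : V}
    (h : G.Reachable a b) : f a = f b := by
  obtain ⟨w⟩ := h
  induction w with
  | nil => rfl
  | cons hadj _ ih => exact (hf _ _ hadj).trans ih

end SimpleGraph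

namespace MCSPaper

open SimpleGraph

section BaseGadget

variable {n S : ℕ}

theorem baseGraph_adj {gb : Bool} {u v : BaseVert n S} :
    (baseGraph n S gb).Adj u v ↔ u ≠ v ∧ (baseRel n S gb u v ∨ baseRel n S gb v u) :=
  fromRel_adj _ _ _

theorem le_card_baseVert : n ≤ Fintype.card (BaseVert n S) := by
  simpa using Fintype.card_le_of_injective (BaseVert.anchor (S := S) · true)
    fun _ _ h => (BaseVert.anchor.inj h).1

def cGadgetIndex : BaseVert n S → Option (Fin n)
  | .arc i g _ _ | .far i g | .anchor i g | .panchor i g => if g then none else some i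
  | .hub | .apmid _ => none

theorem cGadgetIndex_eq_of_adj {u v : BaseVert n S} (h : (baseGraph n S true).Adj u v)
    (hu : u ≠ .hub) (hv : v ≠ .hub) : cGadgetIndex u = cGadgetIndex v := by
  rw [baseGraph_adj] at h
  obtain ⟨-, h | h⟩ := h <;> cases u <;> cases v <;> simp_all [baseRel, cGadgetIndex]

theorem hub_mem_of_preconnected {R : Set (BaseVert n S)}
    (hR : ((baseGraph n S true).induce R).Preconnected) (hRc : Rᶜ.ncard < n) :
    .hub ∈ R := by
  by_contra hhub
  have hne {v} (hv : v ∈ R) : v ≠ .hub := fun h => hhub (h ▸ hv)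
  have hmeet (g : Bool) : ∃ i, BaseVert.panchor i g ∈ R :=
    Set.exists_apply_mem_of_ncard_compl_lt (fun _ _ h => (BaseVert.panchor.inj h).1)
      (by simpa using hRc)
  obtain ⟨i, hi⟩ := hmeet false
  obtain ⟨j, hj⟩ := hmeet true
  have := (hR ⟨_, hi⟩ ⟨_, hj⟩).apply_eq_of_adj (f := cGadgetIndex ∘ Subtype.val)
    fun a b hab => cGadgetIndex_eq_of_adj hab (hne a.2) (hne b.2)
  simp [cGadgetIndex] at this

theorem four_mul_le_ncard_neighborSet_hub (gb : Bool) (hS : 0 < S) :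
    4 * n ≤ ((baseGraph n S gb).neighborSet .hub).ncard := by
  let e (x : Fin n × Bool × Bool) : BaseVert n S := .arc x.1 x.2.1 x.2.2 ⟨0, hS⟩
  have he : e.Injective := fun ⟨_, _, _⟩ ⟨_, _, _⟩ h => by cases h; rfl
  have hsub : Set.range e ⊆ (baseGraph n S gb).neighborSet .hub := by
    rintro _ ⟨x, rfl⟩
    rw [mem_neighborSet, baseGraph_adj]
    exact ⟨by simp [e], .inl rfl⟩
  have := Set.ncard_le_ncard hsub
  rw [Set.ncard_range_of_injective he] at this
  simpa [mul_comm] using this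

/-- `sideVertex i g s k` is the `k`-th vertex on side `s` of the cycle of gadget `(i, g)`,
running from the hub (`k = 0`) to `far i g` (`k = S + 1`). -/
def sideVertex (i : Fin n) (g s : Bool) : ℕ → BaseVert n S
  | 0 => .hub
  | k + 1 => if h : k < S then .arc i g s ⟨k, h⟩ else .far i g

theorem sideVertex_val_succ (i : Fin n) (g s : Bool) (p : Fin S) :
    sideVertex i g s (p.val + 1) = .arc i g s p := by
  simp [sideVertex]

theorem sideVertex_succ_of_le (i : Fin n) (g s : Bool) {k : ℕ} (hk : S ≤ k) :
    sideVertex (S := S) i g s (k + 1) = .far i g := by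
  simp [sideVertex, hk]

theorem neighborSet_arc_subset (gb : Bool) (i : Fin n) (g s : Bool) (p : Fin S) :
    (baseGraph n S gb).neighborSet (.arc i g s p) ⊆
      {sideVertex i g s p, sideVertex i g s (p + 2), .arc i g (!s) p} := by
  intro u hu
  rw [mem_neighborSet, baseGraph_adj] at hu
  obtain ⟨-, h | h⟩ := hu <;> cases u <;> simp only [baseRel] at h
  case inl.arc i' g' s' q =>
    obtain ⟨rfl, rfl, ⟨rfl, hq⟩ | ⟨-, hs, hq⟩⟩ := h
    · right; left
      rw [show p.val + 2 = q.val + 1 by omega, sideVertex_val_succ]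
    · right; right
      obtain rfl : s' = !s := Bool.eq_not_iff.mpr (Ne.symm hs)
      rw [Fin.ext (show q.val = p.val by omega)]; rfl
  case inl.far =>
    obtain ⟨rfl, rfl, hp⟩ := h
    right; left
    rw [sideVertex_succ_of_le _ _ _ (by omega)]
  case inr.hub =>
    left
    rw [h]; rfl
  case inr.arc i' g' s' q =>
    obtain ⟨rfl, rfl, ⟨rfl, hq⟩ | ⟨-, hs, hq⟩⟩ := h
    · left
      rw [hq, sideVertex_val_succ]
    · right; right
      obtain rfl : s' = !s := Bool.eq_not_iff.mpr hs
      rw [Fin.ext (show q.val = p.val by omega)]; rfl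

theorem neighborSet_far_subset (gb : Bool) (i : Fin n) (g : Bool) :
    (baseGraph n S gb).neighborSet (.far i g) ⊆
      {sideVertex i g false S, sideVertex i g true S, .panchor i g} := by
  intro u hu
  rw [mem_neighborSet, baseGraph_adj] at hu
  obtain ⟨-, h | h⟩ := hu <;> cases u <;> simp only [baseRel] at h
  case inl.panchor => obtain ⟨rfl, rfl⟩ := h; right; right; rfl
  case inr.arc i' g' s' q =>
    obtain ⟨rfl, rfl, hq⟩ := h
    have hside := sideVertex_val_succ i' g' s' q
    rw [hq] at hside
    cases s' <;> rw [← hside] <;> simp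

theorem neighborSet_anchor_subset (gb : Bool) (i : Fin n) (g : Bool) :
    (baseGraph n S gb).neighborSet (.anchor i g) ⊆ {.panchor i g} := by
  intro u hu
  rw [mem_neighborSet, baseGraph_adj] at hu
  obtain ⟨-, h | h⟩ := hu <;> cases u <;> simp only [baseRel] at h
  case inr.panchor => obtain ⟨rfl, rfl⟩ := h; rfl

theorem neighborSet_panchor_subset (gb : Bool) (i : Fin n) (g : Bool) :
    (baseGraph n S gb).neighborSet (.panchor i g) ⊆
      insert (.far i g) (insert (.anchor i g) (Set.range .apmid)) := by
  intro u hu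
  rw [mem_neighborSet, baseGraph_adj] at hu
  obtain ⟨-, h | h⟩ := hu <;> cases u <;> simp only [baseRel] at h
  case inl.anchor => obtain ⟨rfl, rfl⟩ := h; exact .inr (.inl rfl)
  case inl.apmid j => exact .inr (.inr ⟨j, rfl⟩)
  case inr.far => obtain ⟨rfl, rfl⟩ := h; exact .inl rfl

theorem neighborSet_apmid_subset (gb : Bool) (j : Fin (n - 1)) :
    (baseGraph n S gb).neighborSet (.apmid j) ⊆ Set.range (.panchor · gb) := by
  intro u hu
  rw [mem_neighborSet, baseGraph_adj] at hu
  obtain ⟨-, h | h⟩ := hu <;> cases u <;> simp only [baseRel] at h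
  case inr.panchor i g => obtain ⟨rfl, -⟩ := h; exact ⟨i, rfl⟩

theorem ncard_neighborSet_le_of_ne_hub (gb : Bool) {v : BaseVert n S} (hv : v ≠ .hub) :
    ((baseGraph n S gb).neighborSet v).ncard ≤ n + 2 := by
  have triple (i : Fin n) (a b c : BaseVert n S) : ({a, b, c} : Set _).ncard ≤ n + 2 :=
    (Set.ncard_le_three a b c).trans (by have := i.pos; omega)
  cases v with
  | hub => exact absurd rfl hv
  | arc i g s p =>
    exact (Set.ncard_le_ncard (neighborSet_arc_subset gb i g s p)).trans (triple i ..)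
  | far i g => exact (Set.ncard_le_ncard (neighborSet_far_subset gb i g)).trans (triple i ..)
  | anchor i g =>
    exact (Set.ncard_le_ncard (neighborSet_anchor_subset gb i g)).trans (by simp)
  | panchor i g =>
    calc _ ≤ _ := Set.ncard_le_ncard (neighborSet_panchor_subset gb i g)
      _ ≤ (Set.range (BaseVert.apmid (n := n) (S := S))).ncard + 1 + 1 :=
        (Set.ncard_insert_le _ _).trans (Nat.succ_le_succ (Set.ncard_insert_le _ _))
      _ ≤ n + 2 := by
        rw [Set.ncard_range_of_injective fun _ _ => BaseVert.apmid.inj]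
        simp
  | apmid j =>
    calc _ ≤ _ := Set.ncard_le_ncard (neighborSet_apmid_subset gb j)
      _ = n := by
        rw [Set.ncard_range_of_injective fun _ _ h => (BaseVert.panchor.inj h).1]
        simp
      _ ≤ n + 2 := by omega

theorem sigmaS_pos {sx sy : Fin n → ℕ} (hn : 1 ≤ n) (hsx : ∀ i, 1 ≤ sx i) :
    0 < SigmaS n sx sy :=
  Finset.sum_pos (fun i _ => by have := hsx i; omega) ⟨⟨0, hn⟩, Finset.mem_univ _⟩

end BaseGadget

theorem maximum_iso_maps_hub_to_hub_general (n : ℕ) (hn : 1 ≤ n) (sx sy : Fin n → ℕ)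
    (hsx : ∀ i, 1 ≤ sx i)
    (R S : Set (BaseVert n (SigmaS n sx sy)))
    (φ : (baseGraph n (SigmaS n sx sy) true).induce R ≃g
          (baseGraph n (SigmaS n sx sy) false).induce S)
    (hconn : ((baseGraph n (SigmaS n sx sy) true).induce R).Connected)
    (hmax : R.ncard = Fintype.card (BaseVert n (SigmaS n sx sy)) - n + 1) :
    ∃ h : (BaseVert.hub : BaseVert n (SigmaS n sx sy)) ∈ R,
      (φ ⟨BaseVert.hub, h⟩).val = BaseVert.hub := by
  have hRc : Rᶜ.ncard < n := by
    have hsplit := Set.ncard_add_ncard_compl R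
    have hcard := le_card_baseVert (n := n) (S := SigmaS n sx sy)
    rw [Nat.card_eq_fintype_card] at hsplit
    omega
  have hhub := hub_mem_of_preconnected hconn.preconnected hRc
  refine ⟨hhub, by_contra fun hne => ?_⟩
  have : 4 * n < n + 2 + n := calc
    4 * n ≤ ((baseGraph n _ true).neighborSet .hub).ncard :=
      four_mul_le_ncard_neighborSet_hub true (sigmaS_pos hn hsx)
    _ ≤ (((baseGraph n _ true).induce R).neighborSet ⟨_, hhub⟩).ncard + Rᶜ.ncard :=
      ncard_neighborSet_le_induce_add_ncard_compl R ⟨_, hhub⟩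
    _ = (((baseGraph n _ false).induce S).neighborSet (φ ⟨_, hhub⟩)).ncard + Rᶜ.ncard := by
      rw [φ.ncard_neighborSet_eq]
    _ ≤ ((baseGraph n _ false).neighborSet (φ ⟨_, hhub⟩).val).ncard + Rᶜ.ncard :=
      Nat.add_le_add_right (ncard_neighborSet_induce_le S _) _
    _ < n + 2 + n := Nat.add_lt_add_of_le_of_lt (ncard_neighborSet_le_of_ne_hub false hne) hRc
  omega

/-- For every instance of Numerical Matching with Target Sums
(`n ≥ 1`, positive values `sx i`, `sy i` and positive targets `b i`), every maximum
common connected induced subgraph isomorphism between the base gadgets `B_G` and `B_H`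
(i.e., every isomorphism `φ : B_G[R] ≃g B_H[S]` with `B_G[R]` connected and
`|R| = |V(B_G)| - n + 1`) maps the vertex `x̄` of `B_G` (the hub, the unique vertex of
unbounded degree) to the vertex `ȳ` of `B_H` (the hub). -/
theorem maximum_iso_maps_hub_to_hub (n : ℕ) (hn : 1 ≤ n) (sx sy b : Fin n → ℕ)
    (hsx : ∀ i, 1 ≤ sx i) (hsy : ∀ i, 1 ≤ sy i) (hb : ∀ i, 1 ≤ b i)
    (R S : Set (BaseVert n (SigmaS n sx sy)))
    (φ : (baseGraph n (SigmaS n sx sy) true).induce R ≃g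
          (baseGraph n (SigmaS n sx sy) false).induce S)
    (hconn : ((baseGraph n (SigmaS n sx sy) true).induce R).Connected)
    (hmax : R.ncard = Fintype.card (BaseVert n (SigmaS n sx sy)) - n + 1) :
    ∃ h : (BaseVert.hub : BaseVert n (SigmaS n sx sy)) ∈ R,
      (φ ⟨BaseVert.hub, h⟩).val = BaseVert.hub :=
  maximum_iso_maps_hub_to_hub_general n hn sx sy hsx R S φ hconn hmax

end MCSPaper
end
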